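/- arXiv:1711.08227 — 3 statements merged into one kernel-verified Lean document; each statement's English description precedes it below -/
import Mathlib

section
/- A nonempty, compact, metrizable, totally disconnected, perfect topological space is homeomorphic to the Cantor set {0,1}^ℕ. -/
/-!
Fix a countable clopen basis `U 0, U 1, …` and grow a binary tree of clopen sets from the whole
space: at depth `d` a node `C` is cut into `C ∩ U d` and `C \ U d` when both pieces are nonempty,
and otherwise along some other basic clopen set that cuts it, which exists because a nonempty open
set in a perfect space has two points. Every node is nonempty, so by compactness each branch
`x : ℕ → Bool` has a point in all of its nodes. Each node of depth `d + 1` lies inside `U d` or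
misses it, so a branch through `p` eventually enters every basic neighbourhood of `p`: the point of
a branch is unique, and depends continuously on the branch. This continuous bijection from the
compact space `ℕ → Bool` onto the Hausdorff space `X` is a homeomorphism.
-/

open Set Filter Topology TopologicalSpace PiNat Function

namespace Brouwer

variable {X : Type*}

def Cuts (V C : Set X) : Prop :=
  (C ∩ V).Nonempty ∧ (C \ V).Nonempty

section Scheme

variable (U : ℕ → Set X)

open Classical in
noncomputable def cutIndex (d : ℕ) (C : Set X) : ℕ :=
  if Cuts (U d) C then d else Classical.epsilon fun m => Cuts (U m) C

noncomputable def cutScheme : List Bool → Set X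
  | [] => univ
  | b :: l =>
    bif b then cutScheme l ∩ U (cutIndex U l.length (cutScheme l))
    else cutScheme l \ U (cutIndex U l.length (cutScheme l))

noncomputable def cutPoint [Nonempty X] (x : ℕ → Bool) : X :=
  Classical.epsilon fun p => ∀ n, p ∈ cutScheme U (res x n)

open Classical in
noncomputable def branchTo (p : X) : ℕ → List Bool
  | 0 => []
  | n + 1 => decide (p ∈ cutScheme U (true :: branchTo p n)) :: branchTo p n

variable {U}

theorem cuts_cutIndex {d : ℕ} {C : Set X} (h : ∃ m, Cuts (U m) C) :
    Cuts (U (cutIndex U d C)) C := by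
  unfold cutIndex
  split_ifs with hd
  · exact hd
  · exact Classical.epsilon_spec h

theorem cutScheme_cons_subset (b : Bool) (l : List Bool) :
    cutScheme U (b :: l) ⊆ cutScheme U l := by
  cases b
  · exact sdiff_subset
  · exact inter_subset_left

theorem cutScheme_true_union_false (l : List Bool) :
    cutScheme U (true :: l) ∪ cutScheme U (false :: l) = cutScheme U l :=
  inter_union_sdiff _ _

theorem cutScheme_disjoint : CantorScheme.Disjoint (cutScheme U) := by
  intro l a b hab
  cases a <;> cases b
  · exact absurd rfl hab
  · exact disjoint_sdiff_inter
  · exact disjoint_sdiff_inter.symm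
  · exact absurd rfl hab

theorem cutScheme_cons_subset_or_disjoint (b : Bool) (l : List Bool) :
    cutScheme U (b :: l) ⊆ U l.length ∨ Disjoint (cutScheme U (b :: l)) (U l.length) := by
  by_cases h : Cuts (U l.length) (cutScheme U l)
  · have hidx : cutIndex U l.length (cutScheme U l) = l.length := if_pos h
    cases b
    · exact .inr (by simp only [cutScheme, hidx, cond_false]; exact disjoint_sdiff_left)
    · exact .inl (by simp only [cutScheme, hidx, cond_true]; exact inter_subset_right)
  · rw [Cuts, not_and_or, not_nonempty_iff_eq_empty, not_nonempty_iff_eq_empty,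
      ← disjoint_iff_inter_eq_empty, sdiff_eq_empty] at h
    rcases h with h | h
    · exact .inr (h.mono_left (cutScheme_cons_subset b l))
    · exact .inl ((cutScheme_cons_subset b l).trans h)

theorem cutScheme_res_succ_subset_of_mem (x : ℕ → Bool) (m : ℕ) {p : X}
    (hp : p ∈ cutScheme U (res x (m + 1))) (hpm : p ∈ U m) :
    cutScheme U (res x (m + 1)) ⊆ U m := by
  have h := cutScheme_cons_subset_or_disjoint (U := U) (x m) (res x m)
  rw [res_length] at h
  exact h.resolve_right fun hdisj => hdisj.notMem_of_mem_left hp hpm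

open Classical in
theorem mem_cutScheme_branchTo (p : X) : ∀ n, p ∈ cutScheme U (branchTo U p n)
  | 0 => mem_univ p
  | n + 1 => by
    by_cases h : p ∈ cutScheme U (true :: branchTo U p n)
    · rwa [branchTo, decide_eq_true h]
    · have hp := mem_cutScheme_branchTo p n
      rw [← cutScheme_true_union_false] at hp
      rw [branchTo, decide_eq_false h]
      exact hp.resolve_left h

end Scheme

variable [TopologicalSpace X] {U : ℕ → Set X}

theorem exists_cuts_of_isTopologicalBasis [T1Space X] [PerfectSpace X]
    (hbasis : IsTopologicalBasis (range U)) {C : Set X} (hC : IsOpen C) (hne : C.Nonempty) :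
    ∃ m, Cuts (U m) C := by
  obtain ⟨p, hp⟩ := hne
  obtain ⟨q, hqp, hqC⟩ : ({p}ᶜ ∩ C).Nonempty :=
    nonempty_of_mem (inter_mem_nhdsWithin {p}ᶜ (hC.mem_nhds hp))
  obtain ⟨_, ⟨m, rfl⟩, hpm, hmq⟩ :=
    hbasis.mem_nhds_iff.1 (isOpen_compl_singleton.mem_nhds (Ne.symm hqp))
  exact ⟨m, ⟨p, hp, hpm⟩, ⟨q, hqC, fun hqm => hmq hqm rfl⟩⟩

theorem eq_of_forall_mem_cutScheme [T1Space X] (hbasis : IsTopologicalBasis (range U))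
    {x : ℕ → Bool} {p q : X} (hp : ∀ n, p ∈ cutScheme U (res x n))
    (hq : ∀ n, q ∈ cutScheme U (res x n)) : p = q := by
  by_contra hpq
  obtain ⟨_, ⟨m, rfl⟩, hpm, hmq⟩ := hbasis.mem_nhds_iff.1 (isOpen_compl_singleton.mem_nhds hpq)
  exact hmq (cutScheme_res_succ_subset_of_mem x m (hp (m + 1)) hpm (hq (m + 1))) rfl

theorem isClopen_cutScheme (hU : ∀ n, IsClopen (U n)) : ∀ l, IsClopen (cutScheme U l)
  | [] => isClopen_univ
  | false :: l => (isClopen_cutScheme hU l).diff (hU _)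
  | true :: l => (isClopen_cutScheme hU l).inter (hU _)

theorem cutScheme_nonempty [Nonempty X] [T1Space X] [PerfectSpace X]
    (hU : ∀ n, IsClopen (U n)) (hbasis : IsTopologicalBasis (range U)) :
    ∀ l, (cutScheme U l).Nonempty
  | [] => univ_nonempty
  | b :: l => by
    have h : Cuts (U (cutIndex U l.length (cutScheme U l))) (cutScheme U l) :=
      cuts_cutIndex (exists_cuts_of_isTopologicalBasis hbasis
        (isClopen_cutScheme hU l).isOpen (cutScheme_nonempty hU hbasis l))
    cases b
    · exact h.2
    · exact h.1

section Homeomorph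

variable [CompactSpace X] [T1Space X] [PerfectSpace X] [Nonempty X]

theorem cutPoint_mem (hU : ∀ n, IsClopen (U n)) (hbasis : IsTopologicalBasis (range U))
    (x : ℕ → Bool) (n : ℕ) : cutPoint U x ∈ cutScheme U (res x n) := by
  have hinter : (⋂ n, cutScheme U (res x n)).Nonempty :=
    IsCompact.nonempty_iInter_of_sequence_nonempty_isCompact_isClosed _
      (fun n => cutScheme_cons_subset _ _) (fun n => cutScheme_nonempty hU hbasis _)
      (isClopen_cutScheme hU _).isClosed.isCompact (fun n => (isClopen_cutScheme hU _).isClosed)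
  exact Classical.epsilon_spec (p := fun p => ∀ n, p ∈ cutScheme U (res x n))
    (by simpa only [nonempty_iInter] using hinter) n

theorem cutPoint_injective (hU : ∀ n, IsClopen (U n)) (hbasis : IsTopologicalBasis (range U)) :
    Injective (cutPoint U) := by
  intro x y hxy
  by_contra hne
  set n := firstDiff x y
  have hres : res y n = res x n := res_eq_res.2 fun m hm => (apply_eq_of_lt_firstDiff hm).symm
  have hx := cutPoint_mem hU hbasis x (n + 1)
  have hy := cutPoint_mem hU hbasis y (n + 1)
  rw [res_succ] at hx
  rw [res_succ, hres, ← hxy] at hy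
  exact cutScheme_disjoint _ (apply_firstDiff_ne hne) |>.notMem_of_mem_left hx hy

theorem cutPoint_surjective (hU : ∀ n, IsClopen (U n)) (hbasis : IsTopologicalBasis (range U)) :
    Surjective (cutPoint U) := by
  intro p
  let x : ℕ → Bool := fun n => (branchTo U p (n + 1)).headI
  have hres : ∀ n, res x n = branchTo U p n := by
    intro n
    induction n with
    | zero => rfl
    | succ n ih => rw [res_succ, ih]; rfl
  exact ⟨x, eq_of_forall_mem_cutScheme hbasis (cutPoint_mem hU hbasis x)
    fun n => hres n ▸ mem_cutScheme_branchTo p n⟩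

theorem continuous_cutPoint (hU : ∀ n, IsClopen (U n)) (hbasis : IsTopologicalBasis (range U)) :
    Continuous (cutPoint U) := by
  refine continuous_iff_continuousAt.2 fun x => hbasis.nhds_hasBasis.tendsto_right_iff.2 ?_
  rintro _ ⟨⟨m, rfl⟩, hxm⟩
  filter_upwards [(isOpen_cylinder _ x (m + 1)).mem_nhds (self_mem_cylinder x (m + 1))] with y hy
  replace hy : res y (m + 1) = res x (m + 1) := by rwa [cylinder_eq_res] at hy
  exact cutScheme_res_succ_subset_of_mem x m (cutPoint_mem hU hbasis x (m + 1)) hxm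
    (hy ▸ cutPoint_mem hU hbasis y (m + 1))

theorem nonempty_homeomorph_cantor_of_isTopologicalBasis [T2Space X]
    (hU : ∀ n, IsClopen (U n)) (hbasis : IsTopologicalBasis (range U)) :
    Nonempty ((ℕ → Bool) ≃ₜ X) :=
  ⟨(continuous_cutPoint hU hbasis).homeoOfEquivCompactToT2
    (f := .ofBijective _ ⟨cutPoint_injective hU hbasis, cutPoint_surjective hU hbasis⟩)⟩

end Homeomorph

theorem exists_isClopen_isTopologicalBasis_range [CompactSpace X] [T2Space X]
    [TotallyDisconnectedSpace X] [SecondCountableTopology X] [Nonempty X] :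
    ∃ U : ℕ → Set X, (∀ n, IsClopen (U n)) ∧ IsTopologicalBasis (range U) := by
  obtain ⟨s, hs, hcount, hbasis⟩ := isTopologicalBasis_isClopen.exists_countable (α := X)
  obtain ⟨t, ht, -⟩ := mem_sUnion.1 (hbasis.sUnion_eq ▸ mem_univ (Classical.arbitrary X))
  obtain ⟨U, rfl⟩ := hcount.exists_eq_range ⟨t, ht⟩
  exact ⟨U, fun n => hs ⟨n, rfl⟩, hbasis⟩

end Brouwer

/-- Brouwer: A nonempty, compact, metrizable, totally disconnected,
perfect (no isolated points) topological space is homeomorphic to the Cantor space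
`{0,1}^ℕ`. -/
theorem brouwer_cantor_characterization
    (X : Type*) [TopologicalSpace X] [Nonempty X] [CompactSpace X]
    [TopologicalSpace.MetrizableSpace X] [TotallyDisconnectedSpace X]
    (hperf : ∀ x : X, Filter.NeBot (nhdsWithin x {x}ᶜ)) :
    Nonempty (X ≃ₜ (ℕ → Bool)) := by
  have : PerfectSpace X := perfectSpace_iff_forall_not_isolated.2 hperf
  obtain ⟨U, hU, hbasis⟩ := Brouwer.exists_isClopen_isTopologicalBasis_range (X := X)
  obtain ⟨e⟩ := Brouwer.nonempty_homeomorph_cantor_of_isTopologicalBasis hU hbasis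
  exact ⟨e.symm⟩
end

section
/- The inverse limit of the sequence in which every space is the circle S¹ and every bonding map is the double covering z ↦ z² is a nonempty compact connected topological space that is not path-connected. -/
/-!
The solenoid is a closed subset of the compact space `(S¹)^ℕ`. Since finitely many coordinates
of a thread are powers of the last of them, the line `d ↦ (exp (d / 2ⁿ))ₙ` is dense, so the
solenoid is connected. For a path starting at `1`, lift every coordinate through the covering
`exp : ℝ → S¹`; uniqueness of lifts forces the lift of each coordinate to be half the previous one,
so the path never leaves the line. The thread `(ω, ω², ω, ω², …)` of cube roots of unity is not on
the line: `exp (3d / 2ⁿ) = 1` for all `n` forces `d = 0`.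
-/

open Set Filter Topology unitInterval

section InverseLimit

variable {X : Type*} [TopologicalSpace X] [T2Space X] {f : X → X}

theorem isClosed_setOf_forall_apply_succ_eq (hf : Continuous f) :
    IsClosed {z : ℕ → X | ∀ n, f (z (n + 1)) = z n} := by
  simp only [ofPred_forall]
  exact isClosed_iInter fun n => isClosed_eq (hf.comp (continuous_apply _)) (continuous_apply _)

theorem compactSpace_inverseLimit [CompactSpace X] (hf : Continuous f) :
    CompactSpace {z : ℕ → X // ∀ n, f (z (n + 1)) = z n} :=
  isCompact_iff_compactSpace.mp (isClosed_setOf_forall_apply_succ_eq hf).isCompact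

end InverseLimit

namespace Circle

theorem exp_two_mul (x : ℝ) : exp (2 * x) = exp x ^ 2 := by
  rw [sq, ← exp_add, two_mul]

theorem eq_zero_of_forall_exp_div_two_pow_eq_one {x : ℝ} (h : ∀ n : ℕ, exp (x / 2 ^ n) = 1) :
    x = 0 := by
  choose m hm using fun n => exp_eq_one.mp (h n)
  have hx (n : ℕ) : x = ((2 ^ n * m n : ℤ) : ℝ) * (2 * Real.pi) := by
    rw [Int.cast_mul, Int.cast_pow, Int.cast_two, mul_assoc, ← hm n,
      mul_div_cancel₀ _ (by positivity)]
  have hdvd (n : ℕ) : 2 ^ n ∣ m 0 := ⟨m n, by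
    simpa using Int.cast_injective
      (mul_right_cancel₀ Real.two_pi_pos.ne' ((hx 0).symm.trans (hx n)))⟩
  have hm0 : m 0 = 0 := Int.eq_zero_of_dvd_of_natAbs_lt_natAbs (hdvd (m 0).natAbs)
    (by simpa [Int.natAbs_pow] using Nat.lt_two_pow_self)
  simpa [hm0] using hx 0

end Circle

abbrev DyadicSolenoid := {z : ℕ → Circle // ∀ n, (z (n + 1)) ^ 2 = z n}

namespace DyadicSolenoid

theorem pow_two_pow_apply_add (z : DyadicSolenoid) (k m : ℕ) : z.1 (k + m) ^ 2 ^ m = z.1 k := by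
  induction m with
  | zero => simp
  | succ m ih => rw [← add_assoc, pow_succ', pow_mul, z.2, ih]

noncomputable def line (d : ℝ) : DyadicSolenoid :=
  ⟨fun n => Circle.exp (d / 2 ^ n), fun n => by
    rw [← Circle.exp_two_mul]; congr 1; field_simp; ring⟩

theorem continuous_line : Continuous line :=
  (continuous_pi fun _ => Circle.exp.continuous.comp (continuous_id.div_const _)).subtype_mk _

theorem exists_line_apply_eq_of_le (z : DyadicSolenoid) (N : ℕ) :
    ∃ d, ∀ k ≤ N, (line d).1 k = z.1 k := by
  obtain ⟨x, hx⟩ := Circle.exp_surjective (z.1 N)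
  refine ⟨2 ^ N * x, fun k hk => ?_⟩
  obtain ⟨m, rfl⟩ := Nat.exists_eq_add_of_le hk
  have hdiv : (2 : ℝ) ^ (k + m) * x / 2 ^ k = ((2 ^ m : ℕ) : ℝ) * x := by
    push_cast; field_simp; ring
  simp only [line, hdiv, Circle.exp_natCast_mul, hx, pow_two_pow_apply_add]

theorem denseRange_line : DenseRange line := by
  intro z
  choose d hd using exists_line_apply_eq_of_le z
  refine mem_closure_of_tendsto (f := fun N => line (d N)) (b := atTop) ?_
    (Eventually.of_forall fun N => mem_range_self _)
  rw [tendsto_subtype_rng, tendsto_pi_nhds]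
  exact fun k => tendsto_const_nhds.congr' <|
    (eventually_ge_atTop k).mono fun N hN => (hd N k hN).symm

theorem exists_eq_line_of_joined {b : DyadicSolenoid} (h : Joined (line 0) b) :
    ∃ d, b = line d := by
  obtain ⟨γ⟩ := h
  let coord (n : ℕ) : C(I, Circle) :=
    ⟨fun t => (γ t).1 n, (continuous_apply n).comp (continuous_subtype_val.comp γ.continuous)⟩
  have hcoord_zero (n : ℕ) : coord n 0 = Circle.exp 0 := by
    change (γ 0).1 n = _
    rw [γ.source]
    simp [line]
  choose Γ hΓ hΓ0 using fun n => Circle.isCoveringMap_exp.exists_path_lifts (coord n) 0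
    (hcoord_zero n)
  have hΓ_apply (n : ℕ) (t : I) : Circle.exp (Γ n t) = (γ t).1 n := congrFun (hΓ n) t
  -- `2 Γₙ₊₁` is a lift of `γₙ = γₙ₊₁²` starting at `0`, so it is `Γₙ` by uniqueness of lifts
  have hhalve (n : ℕ) : ⇑(Γ n) = fun t => 2 * Γ (n + 1) t := by
    refine Circle.isCoveringMap_exp.eq_of_comp_eq (Γ n).continuous
      (continuous_const.mul (Γ (n + 1)).continuous) (funext fun t => ?_) 0 (by simp [hΓ0])
    simp only [Function.comp_apply, Circle.exp_two_mul, hΓ_apply, (γ t).2]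
  have hΓ_div (n : ℕ) (t : I) : Γ n t = Γ 0 t / 2 ^ n := by
    induction n with
    | zero => simp
    | succ n ih => rw [pow_succ, ← div_div, ← ih, congrFun (hhalve n) t]; ring
  exact ⟨Γ 0 1, Subtype.ext <| funext fun n => by
    rw [← γ.target, ← hΓ_apply, hΓ_div]; rfl⟩

theorem eq_zero_of_forall_line_apply_pow_eq_one {d : ℝ} {k : ℕ} (hk : k ≠ 0)
    (h : ∀ n, (line d).1 n ^ k = 1) : d = 0 := by
  have hkd : (k : ℝ) * d = 0 := Circle.eq_zero_of_forall_exp_div_two_pow_eq_one fun n => by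
    rw [mul_div_assoc, Circle.exp_natCast_mul]; exact h n
  simpa [hk] using hkd

noncomputable def ω : Circle := Circle.exp (2 * Real.pi / 3)

theorem ω_pow_three : ω ^ 3 = 1 := by
  rw [ω, ← Circle.exp_natCast_mul]
  push_cast
  rw [mul_div_cancel₀ _ three_ne_zero, Circle.exp_two_pi]

theorem ω_ne_one : ω ≠ 1 := by
  intro h
  obtain ⟨m, hm⟩ := Circle.exp_eq_one.mp h
  have : (3 * m : ℤ) = 1 := by
    have := Real.two_pi_pos
    exact_mod_cast (by field_simp at hm; nlinarith : (3 * m : ℝ) = 1)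
  omega

noncomputable def cubeRootThread : DyadicSolenoid :=
  ⟨fun n => ω ^ 2 ^ n, fun n => calc
    (ω ^ 2 ^ (n + 1)) ^ 2 = ω ^ 2 ^ n * (ω ^ 3) ^ 2 ^ n := by
      rw [← pow_mul, ← pow_mul, ← pow_add]; congr 1; ring
    _ = ω ^ 2 ^ n := by rw [ω_pow_three, one_pow, mul_one]⟩

theorem cubeRootThread_not_mem_range_line : cubeRootThread ∉ range line := by
  rintro ⟨d, hd⟩
  have hd0 : d = 0 := eq_zero_of_forall_line_apply_pow_eq_one three_ne_zero fun n => by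
    rw [hd, cubeRootThread, ← pow_mul, mul_comm, pow_mul, ω_pow_three, one_pow]
  have h0 := congrFun (congrArg Subtype.val hd) 0
  simp [hd0, line, cubeRootThread] at h0
  exact ω_ne_one h0.symm

end DyadicSolenoid

open DyadicSolenoid

/-- The dyadic solenoid (inverse limit of circles under `z ↦ z²`) is
a nonempty compact connected topological space that is not path-connected. -/
theorem dyadic_solenoid_properties :
    Nonempty {z : ℕ → Circle // ∀ n, (z (n + 1)) ^ 2 = z n} ∧
    CompactSpace {z : ℕ → Circle // ∀ n, (z (n + 1)) ^ 2 = z n} ∧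
    ConnectedSpace {z : ℕ → Circle // ∀ n, (z (n + 1)) ^ 2 = z n} ∧
    ¬ PathConnectedSpace {z : ℕ → Circle // ∀ n, (z (n + 1)) ^ 2 = z n} := by
  have : PreconnectedSpace DyadicSolenoid := denseRange_line.preconnectedSpace continuous_line
  refine ⟨⟨line 0⟩, compactSpace_inverseLimit (continuous_pow 2), ⟨⟨line 0⟩⟩, fun h => ?_⟩
  obtain ⟨d, hd⟩ := exists_eq_line_of_joined (h.joined (line 0) cubeRootThread)
  exact cubeRootThread_not_mem_range_line ⟨d, hd.symm⟩
end

section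
/- In a finite simple graph that is 2-connected (biconnected), for any two distinct vertices u and v and any two distinct vertices u' and v', there exist two vertex-disjoint paths, one from u to u' and one from v to v', or one from u to v' and one from v to u'. -/
/-- A finite simple graph is 2-connected (biconnected) if it has at least 3
vertices, is connected, and remains connected after deleting any single vertex. -/
def SimpleGraph.TwoConnected {V : Type*} [Fintype V] (G : SimpleGraph V) : Prop :=
  3 ≤ Fintype.card V ∧ G.Connected ∧
    ∀ v : V, (G.induce {w : V | w ≠ v}).Connected

/-!
Attach to `G` a new vertex `s` adjacent to `u, v` and a new vertex `t` adjacent to `u', v'`.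
The enlarged graph still has no cut vertex, so by Whitney's theorem it has two internally
disjoint `s`–`t` paths; deleting `s` and `t` from them leaves the required disjoint paths of `G`.

Whitney's theorem is proved by induction along a walk `a ⋯ x b`: given internally disjoint
`a`–`x` paths `P₁, P₂`, follow a `b`–`a` walk avoiding `x` until it first meets `P₁ ∪ P₂`, say
at `y ∈ P₁`. Then `P₁` up to `y` followed by that segment back to `b`, and `P₂` followed by the
edge `x b`, are internally disjoint `a`–`b` walks.
-/

namespace SimpleGraph

variable {V : Type*} {G : SimpleGraph V}

def NoCutVertex (G : SimpleGraph V) : Prop :=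
  ∀ x a b : V, a ≠ x → b ≠ x → ∃ p : G.Walk a b, x ∉ p.support

theorem noCutVertex_of_forall_induce_connected
    (h : ∀ x : V, (G.induce {w | w ≠ x}).Connected) : G.NoCutVertex := by
  intro x a b hax hbx
  obtain ⟨p⟩ := h x ⟨a, hax⟩ ⟨b, hbx⟩
  refine ⟨p.map (Embedding.induce _).toHom, fun hx => ?_⟩
  obtain ⟨⟨y, hy⟩, -, hyx⟩ := List.mem_map.mp (Walk.support_map _ p ▸ hx)
  exact hy hyx

namespace Walk

variable {u v : V}

def InternallyDisjoint (p q : G.Walk u v) : Prop :=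
  ∀ w ∈ p.support, w ∈ q.support → w = u ∨ w = v

theorem InternallyDisjoint.symm {p q : G.Walk u v} (h : p.InternallyDisjoint q) :
    q.InternallyDisjoint p :=
  fun w hq hp => h w hp hq

theorem exists_walk_to_first_mem (S : Set V) (p : G.Walk u v) (hv : v ∈ S) :
    ∃ y ∈ S, ∃ q : G.Walk u y, q.support ⊆ p.support ∧ ∀ w ∈ q.support, w ∈ S → w = y := by
  induction p with
  | nil => exact ⟨_, hv, nil, by simp, by simp⟩
  | @cons u _ _ h p ih =>
    by_cases hu : u ∈ S
    · exact ⟨u, hu, nil, by simp, by simp⟩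
    obtain ⟨y, hy, q, hqp, hqS⟩ := ih hv
    refine ⟨y, hy, cons h q, List.cons_subset_cons _ hqp, ?_⟩
    intro w hw hwS
    rcases List.mem_cons.mp hw with rfl | hw
    · exact absurd hwS hu
    · exact hqS w hw hwS

theorem exists_internallyDisjoint_of_mem_of_adj {a x b y : V} {P₁ P₂ : G.Walk a x}
    (hP₁ : P₁.IsPath) (hd : P₁.InternallyDisjoint P₂) (hxb : G.Adj x b) (hy : y ∈ P₁.support)
    (T : G.Walk b y) (hxT : x ∉ T.support)
    (hT : ∀ w ∈ T.support, w ∈ P₁.support ∨ w ∈ P₂.support → w = y) :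
    ∃ P Q : G.Walk a b, P.IsPath ∧ Q.IsPath ∧ P.InternallyDisjoint Q := by
  classical
  have hyx : y ≠ x := fun h => hxT (h ▸ T.end_mem_support)
  refine ⟨((P₁.takeUntil y hy).append T.reverse).bypass, (P₂.concat hxb).bypass,
    bypass_isPath _, bypass_isPath _, fun w hwA hwB => ?_⟩
  replace hwA := support_bypass_subset_support _ hwA
  replace hwB := support_bypass_subset_support _ hwB
  rw [mem_support_append_iff, support_reverse, List.mem_reverse] at hwA
  rw [support_concat, List.mem_append, List.mem_singleton] at hwB
  rcases hwB with hwB | rfl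
  · rcases hwA with hwA | hwA
    · rcases hd w (support_takeUntil_subset_support _ hy hwA) hwB with rfl | rfl
      · exact .inl rfl
      · exact absurd hwA (endpoint_notMem_support_takeUntil hP₁ hy hyx.symm)
    · obtain rfl := hT w hwA (.inr hwB)
      exact (hd w hy hwB).imp id fun h => absurd h hyx
  · exact .inr rfl

end Walk

theorem NoCutVertex.exists_internallyDisjoint_paths (hG : G.NoCutVertex) {a b : V}
    (p : G.Walk a b) (hab : a ≠ b) :
    ∃ P Q : G.Walk a b, P.IsPath ∧ Q.IsPath ∧ P.InternallyDisjoint Q := by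
  induction p using Walk.concatRec with
  | Hnil => exact absurd rfl hab
  | @Hconcat a x b p hxb ih =>
    by_cases hax : a = x
    · subst hax
      exact ⟨hxb.toWalk, hxb.toWalk, hxb.isPath_toWalk, hxb.isPath_toWalk, by
        simp [Walk.InternallyDisjoint, Adj.toWalk]⟩
    obtain ⟨P₁, P₂, hP₁, hP₂, hd⟩ := ih hax
    obtain ⟨R, hxR⟩ := hG x b a hxb.ne.symm hax
    obtain ⟨y, hyS, q, hqR, hqS⟩ :=
      R.exists_walk_to_first_mem {w | w ∈ P₁.support ∨ w ∈ P₂.support} (.inl P₁.start_mem_support)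
    have hxq : x ∉ q.support := fun h => hxR (hqR h)
    rcases hyS with hy | hy
    · exact Walk.exists_internallyDisjoint_of_mem_of_adj hP₁ hd hxb hy q hxq hqS
    · exact Walk.exists_internallyDisjoint_of_mem_of_adj hP₂ hd.symm hxb hy q hxq
        fun w hw h => hqS w hw h.symm

section Attach

variable {ι : Type*} {S : ι → Set V}

def attach (G : SimpleGraph V) (S : ι → Set V) : SimpleGraph (V ⊕ ι) where
  Adj
    | .inl x, .inl y => G.Adj x y
    | .inl x, .inr i | .inr i, .inl x => x ∈ S i
    | .inr _, .inr _ => False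
  symm := ⟨by rintro (x | i) (y | j) h <;> first | exact h.symm | exact h⟩
  loopless := ⟨by rintro (x | i) h; exacts [h.ne rfl, h]⟩

@[simp] theorem attach_adj_inl_inl {x y : V} : (G.attach S).Adj (.inl x) (.inl y) ↔ G.Adj x y :=
  Iff.rfl

@[simp] theorem attach_adj_inr_inl {x : V} {i : ι} : (G.attach S).Adj (.inr i) (.inl x) ↔ x ∈ S i :=
  Iff.rfl

@[simp] theorem not_attach_adj_inr_inr {i j : ι} : ¬(G.attach S).Adj (.inr i) (.inr j) :=
  id

theorem exists_attach_walk_support_eq_map {a b : V} (p : G.Walk a b) :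
    ∃ q : (G.attach S).Walk (.inl a) (.inl b), q.support = p.support.map .inl :=
  ⟨(p.map (⟨Sum.inl, id⟩ : G →g G.attach S)).copy rfl rfl, by
    simp only [Walk.support_copy, Walk.support_map]; rfl⟩

theorem NoCutVertex.attach (hG : G.NoCutVertex) (hconn : G.Preconnected)
    (hS : ∀ i, ∃ x ∈ S i, ∃ y ∈ S i, x ≠ y) : (G.attach S).NoCutVertex := by
  intro z
  have anchor : ∀ a, a ≠ z →
      ∃ a' : V, .inl a' ≠ z ∧ ∃ p : (G.attach S).Walk a (.inl a'), z ∉ p.support := by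
    rintro (a | i) ha
    · exact ⟨a, ha, .nil, by simpa using ha.symm⟩
    obtain ⟨x, hx, y, hy, hxy⟩ := hS i
    obtain ⟨a', ha', haz⟩ : ∃ a' ∈ S i, .inl a' ≠ z := by
      by_contra! h
      exact hxy (Sum.inl_injective ((h x hx).trans (h y hy).symm))
    refine ⟨a', haz, (attach_adj_inr_inl.mpr ha').toWalk, ?_⟩
    simp [Adj.toWalk, ha.symm, haz.symm]
  have core : ∀ a' b' : V, .inl a' ≠ z → .inl b' ≠ z →
      ∃ p : (G.attach S).Walk (.inl a') (.inl b'), z ∉ p.support := by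
    intro a' b' ha hb
    rcases z with c | i
    · obtain ⟨p, hp⟩ := hG c a' b' (fun h => ha (h ▸ rfl)) (fun h => hb (h ▸ rfl))
      obtain ⟨q, hq⟩ := exists_attach_walk_support_eq_map (S := S) p
      exact ⟨q, by simpa [hq] using hp⟩
    · obtain ⟨q, hq⟩ := exists_attach_walk_support_eq_map (S := S) (hconn a' b').some
      exact ⟨q, by simp [hq]⟩
  intro a b ha hb
  obtain ⟨a', ha', p, hp⟩ := anchor a ha
  obtain ⟨b', hb', q, hq⟩ := anchor b hb
  obtain ⟨r, hr⟩ := core a' b' ha' hb'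
  exact ⟨p.append (r.append q.reverse), by
    simp [Walk.mem_support_append_iff, hp, hq, hr]⟩

theorem exists_walk_of_attach_walk_inl_inr :
    ∀ {a : V} {j : ι} (R : (G.attach S).Walk (.inl a) (.inr j)),
      ∃ k, .inr k ∈ R.support ∧ ∃ b ∈ S k, ∃ r : G.Walk a b, ∀ w ∈ r.support, .inl w ∈ R.support
  | _, _, .cons (v := .inl _) h R =>
    let ⟨k, hk, b, hb, r, hr⟩ := exists_walk_of_attach_walk_inl_inr R
    ⟨k, List.mem_cons_of_mem _ hk, b, hb, .cons (attach_adj_inl_inl.mp h) r, fun w hw => by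
      rcases List.mem_cons.mp hw with rfl | hw
      exacts [List.mem_cons_self, List.mem_cons_of_mem _ (hr w hw)]⟩
  | _, _, .cons (v := .inr k) h _ => ⟨k, by simp, _, h, .nil, by simp⟩

theorem exists_path_of_attach_isPath {i j : ι} (hij : i ≠ j)
    (P : (G.attach S).Walk (.inr i) (.inr j)) (hP : P.IsPath) :
    ∃ k ≠ i, ∃ a ∈ S i, ∃ b ∈ S k, ∃ r : G.Walk a b,
      r.IsPath ∧ ∀ w ∈ r.support, .inl w ∈ P.support := by
  classical
  cases P with
  | nil => exact absurd rfl hij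
  | @cons _ m _ h R =>
    rcases m with a | _
    · obtain ⟨k, hk, b, hb, r, hr⟩ := exists_walk_of_attach_walk_inl_inr R
      have hki : k ≠ i := by
        rintro rfl
        exact (Walk.cons_isPath_iff h R).mp hP |>.2 hk
      exact ⟨k, hki, a, h, b, hb, r.bypass, r.bypass_isPath, fun w hw =>
        List.mem_cons_of_mem _ (hr w (r.support_bypass_subset_support hw))⟩
    · exact absurd h not_attach_adj_inr_inr

end Attach

end SimpleGraph

theorem eq_and_eq_or_eq_and_eq_of_ne {α : Type*} {a b x y : α} (hx : x = a ∨ x = b)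
    (hy : y = a ∨ y = b) (hxy : x ≠ y) : x = a ∧ y = b ∨ x = b ∧ y = a := by
  grind

/-- In a finite simple 2-connected graph, for any two distinct
vertices `u, v` and any two distinct vertices `u', v'`, there exist two
vertex-disjoint paths, one from `u` to `u'` and one from `v` to `v'`, or one from
`u` to `v'` and one from `v` to `u'`. -/
theorem SimpleGraph.TwoConnected.disjoint_paths {V : Type*} [Fintype V]
    (G : SimpleGraph V) (hG : G.TwoConnected)
    (u v u' v' : V) (huv : u ≠ v) (huv' : u' ≠ v') :
    (∃ (P : G.Walk u u') (Q : G.Walk v v'),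
        P.IsPath ∧ Q.IsPath ∧ P.support.Disjoint Q.support) ∨
    (∃ (P : G.Walk u v') (Q : G.Walk v u'),
        P.IsPath ∧ Q.IsPath ∧ P.support.Disjoint Q.support) := by
  obtain ⟨-, hconn, hsep⟩ := hG
  let S : Bool → Set V := fun b => if b then {u', v'} else {u, v}
  have hS : ∀ b, ∃ x ∈ S b, ∃ y ∈ S b, x ≠ y := by
    rintro (_ | _)
    exacts [⟨u, by simp [S], v, by simp [S], huv⟩, ⟨u', by simp [S], v', by simp [S], huv'⟩]
  have hN := (noCutVertex_of_forall_induce_connected hsep).attach hconn.preconnected hS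
  obtain ⟨p, -⟩ := hN (.inl u) (.inr false) (.inr true) Sum.inr_ne_inl Sum.inr_ne_inl
  obtain ⟨P, Q, hP, hQ, hPQ⟩ := hN.exists_internallyDisjoint_paths p (by simp)
  obtain ⟨k, hk, a₁, ha₁, b₁, hb₁, r₁, hr₁, hr₁P⟩ := exists_path_of_attach_isPath (by simp) P hP
  obtain ⟨l, hl, a₂, ha₂, b₂, hb₂, r₂, hr₂, hr₂Q⟩ := exists_path_of_attach_isPath (by simp) Q hQ
  obtain rfl : k = true := by simpa using hk
  obtain rfl : l = true := by simpa using hl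
  have hr : r₁.support.Disjoint r₂.support := fun w h₁ h₂ => by
    simpa using hPQ _ (hr₁P w h₁) (hr₂Q w h₂)
  have ha : a₁ ≠ a₂ := by rintro rfl; exact hr r₁.start_mem_support r₂.start_mem_support
  have hb : b₁ ≠ b₂ := by rintro rfl; exact hr r₁.end_mem_support r₂.end_mem_support
  simp only [S, Bool.false_eq_true, if_true, if_false, Set.mem_insert_iff,
    Set.mem_singleton_iff] at ha₁ ha₂ hb₁ hb₂
  obtain ⟨rfl, rfl⟩ | ⟨rfl, rfl⟩ := eq_and_eq_or_eq_and_eq_of_ne ha₁ ha₂ ha <;>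
    obtain ⟨rfl, rfl⟩ | ⟨rfl, rfl⟩ := eq_and_eq_or_eq_and_eq_of_ne hb₁ hb₂ hb
  · exact .inl ⟨r₁, r₂, hr₁, hr₂, hr⟩
  · exact .inr ⟨r₁, r₂, hr₁, hr₂, hr⟩
  · exact .inr ⟨r₂, r₁, hr₂, hr₁, hr.symm⟩
  · exact .inl ⟨r₂, r₁, hr₂, hr₁, hr.symm⟩
end
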